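/- Let f solve the Blasius equation with f(0)=f'(0)=0 and f''(0) = a > 0. Then f, f', f'' are all positive on (0, ∞) as long as the solution exists, and consequently f' is strictly increasing. -/

import Mathlib

open Real Filter

theorem blasius_positivity
    (T : ℝ) (hT : 0 < T)
    (f : ℝ → ℝ) (hf : ContDiff ℝ (⊤ : ℕ∞) f)
    (hblasius : ∀ η ∈ Set.Ico (0:ℝ) T,
      iteratedDeriv 3 f η + (1/2) * f η * iteratedDeriv 2 f η = 0)
    (a : ℝ) (ha : 0 < a)
    (hf0 : f 0 = 0) (hf'0 : deriv f 0 = 0) (hf''0 : iteratedDeriv 2 f 0 = a) :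
    (∀ η ∈ Set.Ioo (0:ℝ) T, 0 < f η ∧ 0 < deriv f η ∧ 0 < iteratedDeriv 2 f η)
      ∧ StrictMonoOn (deriv f) (Set.Ico (0:ℝ) T) := by
  have hfi : ContDiff ℝ (⊤:ℕ∞) f := hf.of_le (by simp)
  have hfc : Continuous f := hf.continuous
  -- antiderivative of f
  set F : ℝ → ℝ := fun x => ∫ t in (0:ℝ)..x, f t with hFdef
  have hFd : ∀ x, HasDerivAt F (f x) x := fun x =>
    (hfc.integral_hasStrictDerivAt 0 x).hasDerivAt
  have hFc : Continuous F := by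
    have : Differentiable ℝ F := fun x => (hFd x).differentiableAt
    exact this.continuous
  set g : ℝ → ℝ := fun x => iteratedDeriv 2 f x * Real.exp ((1/2) * F x) with hgdef
  have hd2c : Continuous (iteratedDeriv 2 f) := by
    rw [iteratedDeriv_eq_iterate]
    exact ((hfi.iterate_deriv 2).differentiable (by simp)).continuous
  have hd2 : ∀ x, HasDerivAt (iteratedDeriv 2 f) (iteratedDeriv 3 f x) x := by
    intro x
    have hdiff : DifferentiableAt ℝ (iteratedDeriv 2 f) x := by
      rw [iteratedDeriv_eq_iterate]
      exact ((hfi.iterate_deriv 2).differentiable (by simp)).differentiableAt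
    have := hdiff.hasDerivAt
    rwa [show deriv (iteratedDeriv 2 f) x = iteratedDeriv 3 f x from
      (iteratedDeriv_succ (n := 2) (f := f)).symm ▸ rfl] at this
  have hgd : ∀ x ∈ Set.Ico (0:ℝ) T, HasDerivAt g 0 x := by
    intro x hx
    have h1 : HasDerivAt (fun y => Real.exp ((1/2) * F y))
        (Real.exp ((1/2) * F x) * ((1/2) * f x)) x := by
      have := ((hFd x).const_mul (1/2 : ℝ)).exp
      simpa [mul_comm] using this
    have h2 := (hd2 x).mul h1
    have key := hblasius x hx
    have heq : iteratedDeriv 3 f x * Real.exp ((1/2) * F x) +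
        iteratedDeriv 2 f x * (Real.exp ((1/2) * F x) * ((1/2) * f x)) = 0 := by
      have h3 : Real.exp ((1/2) * F x) *
          (iteratedDeriv 3 f x + (1/2) * f x * iteratedDeriv 2 f x) = 0 := by
        rw [key]; ring
      nlinarith [h3]
    rw [heq] at h2
    exact h2
  have hgcont : Continuous g := hd2c.mul ((continuous_const.mul hFc).rexp)
  -- g x = a on Ico 0 T
  have hF0 : F 0 = 0 := by simp [hFdef]
  have hg0 : g 0 = a := by simp [hgdef, hF0, hf''0]
  have hgconst : ∀ x ∈ Set.Ico (0:ℝ) T, g x = a := by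
    intro x hx
    rcases eq_or_lt_of_le hx.1 with h | h
    · rw [← h, hg0]
    · have := constant_of_has_deriv_right_zero (f := g) (a := 0) (b := x)
        (hgcont.continuousOn)
        (fun y hy => (hgd y ⟨hy.1, lt_of_lt_of_le hy.2 (le_of_lt hx.2)⟩).hasDerivWithinAt)
        x (Set.right_mem_Icc.2 h.le)
      rw [this, hg0]
  -- f'' > 0 on Ico 0 T
  have hf''pos : ∀ x ∈ Set.Ico (0:ℝ) T, 0 < iteratedDeriv 2 f x := by
    intro x hx
    have h := hgconst x hx
    have hexp : 0 < Real.exp ((1/2) * F x) := Real.exp_pos _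
    simp only [hgdef] at h
    nlinarith [h]
  -- deriv f strict mono on Ico 0 T
  have hderiv2 : ∀ x, deriv (deriv f) x = iteratedDeriv 2 f x := by
    intro x
    rw [iteratedDeriv_succ, iteratedDeriv_one]
  have hf'cont : Continuous (deriv f) :=
    ((hfi.iterate_deriv 1).differentiable (by simp)).continuous.congr
      (by intro x; simp)
  have hmono : StrictMonoOn (deriv f) (Set.Ico (0:ℝ) T) := by
    apply strictMonoOn_of_deriv_pos (convex_Ico 0 T) hf'cont.continuousOn
    intro x hx
    rw [interior_Ico] at hx
    rw [hderiv2]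
    exact hf''pos x ⟨hx.1.le, hx.2⟩
  have hf'pos : ∀ x ∈ Set.Ioo (0:ℝ) T, 0 < deriv f x := by
    intro x hx
    have := hmono (Set.left_mem_Ico.2 hT) ⟨hx.1.le, hx.2⟩ hx.1
    rwa [hf'0] at this
  have hfmono : StrictMonoOn f (Set.Ico (0:ℝ) T) := by
    apply strictMonoOn_of_deriv_pos (convex_Ico 0 T) hfc.continuousOn
    intro x hx
    rw [interior_Ico] at hx
    exact hf'pos x hx
  have hfpos : ∀ x ∈ Set.Ioo (0:ℝ) T, 0 < f x := by
    intro x hx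
    have := hfmono (Set.left_mem_Ico.2 hT) ⟨hx.1.le, hx.2⟩ hx.1
    rwa [hf0] at this
  exact ⟨fun η hη => ⟨hfpos η hη, hf'pos η hη, hf''pos η ⟨hη.1.le, hη.2⟩⟩, hmono⟩
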